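/- arXiv:1410.5406 — 3 statements merged into one kernel-verified Lean document; each statement's English description precedes it below -/
import Mathlib

section
/- The cycle index theorem: for a sequence (a_m) of complex numbers, the formal power series identity Σ_{n≥0} (t^n/n!) Σ_{σ ∈ S_n} Π_{m=1}^n a_m^{C_m(σ)} = exp(Σ_{m≥1} (a_m/m) t^m) holds, where C_m(σ) is the number of cycles of length m of σ. -/
/-!
Let `S n = ∑_{σ ∈ S_n} ∏_m a_m ^ C_m(σ)`. Sort the permutations of an `(n+1)`-element set by the
cycle through a chosen point `z`: a cycle of length `k + 1` through `z` can be chosen in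
`n (n-1) ⋯ (n-k+1)` ways, and the rest is an arbitrary permutation of the remaining `n - k`
points, so `S (n+1) = ∑_k n.descFactorial k * a (k+1) * S (n-k)`.
With `g = ∑ (a_m / m) t^m`, the series `E = exp g` satisfies `E' = g' E`, i.e.
`(n+1) e (n+1) = ∑_k a (k+1) e (n-k)`; since `g` has no constant term, `e n` is already the
`n`-th coefficient of the partial sum `∑_{k ≤ n} g^k / k!`. Hence `S n` and `n! e n` obey the
same recursion and agree at `n = 0`.
-/

open Nat Finset

/-- Full cycle type: cycle type together with fixed points as 1-cycles. -/
noncomputable def fullCycleType {n : ℕ} (σ : Equiv.Perm (Fin n)) : Multiset ℕ :=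
  σ.cycleType + Multiset.replicate (n - σ.cycleType.sum) 1

/-- `C_m(σ)`: the number of cycles of length `m` of `σ` (fixed points count as 1-cycles). -/
noncomputable def cycleCount {n : ℕ} (σ : Equiv.Perm (Fin n)) (m : ℕ) : ℕ :=
  (fullCycleType σ).count m

open PowerSeries

theorem Finset.sum_filter_mem_eq_sum_range_choose {α M : Type*} [Fintype α] [DecidableEq α]
    [AddCommMonoid M] (z : α) (F : ℕ → M) :
    ∑ s : Finset α with z ∈ s, F #s =
      ∑ k ∈ range (Fintype.card α), (Fintype.card α - 1).choose k • F (k + 1) := by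
  have hcard : #(univ.erase z) + 1 = Fintype.card α := by
    rw [card_erase_add_one (mem_univ z), card_univ]
  rw [← hcard, Nat.add_sub_cancel, ← sum_powerset_apply_card (fun k => F (k + 1))]
  refine sum_nbij' (·.erase z) (insert z) (fun s _ => ?_) (fun t ht => ?_) (fun s hs => ?_)
    (fun t ht => ?_) fun s hs => ?_
  · exact mem_powerset.mpr (erase_subset_erase z (subset_univ s))
  · simp
  · exact insert_erase (mem_filter.mp hs).2
  · exact erase_insert fun hz => by simpa using mem_powerset.mp ht hz
  · rw [card_erase_add_one (mem_filter.mp hs).2]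

namespace Equiv.Perm

section Subtype

variable {α : Type*}

theorem isCycleOn_iff_isCycleOn_univ_subtypePerm {σ : Perm α} {s : Finset α}
    (h : ∀ x, σ x ∈ s ↔ x ∈ s) : σ.IsCycleOn s ↔ (σ.subtypePerm h).IsCycleOn _root_.Set.univ := by
  refine ⟨fun hσ => hσ.subtypePerm, fun hσ => ⟨Equiv.bijOn σ h, fun x hx y hy => ?_⟩⟩
  exact sameCycle_subtypePerm.mp (hσ.2 (_root_.Set.mem_univ ⟨x, hx⟩) (_root_.Set.mem_univ ⟨y, hy⟩))

variable {p : α → Prop} [DecidablePred p]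

theorem subtypeCongr_subtypePerm (σ : Perm α) (h : ∀ x, p (σ x) ↔ p x) :
    (σ.subtypePerm h).subtypeCongr (σ.subtypePerm fun x => not_congr (h x)) = σ := by
  ext x
  by_cases hx : p x
  · rw [subtypeCongr.left_apply _ _ hx, subtypePerm_apply]
  · rw [subtypeCongr.right_apply _ _ hx, subtypePerm_apply]

variable (c : Perm {x // p x}) (d : Perm {x // ¬p x})

theorem subtypePerm_subtypeCongr (h : ∀ x, p (c.subtypeCongr d x) ↔ p x) :
    (c.subtypeCongr d).subtypePerm h = c := by
  ext x
  simp [subtypeCongr.left_apply_subtype]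

theorem subtypeCongr_eq_ofSubtype_mul_ofSubtype :
    c.subtypeCongr d = ofSubtype c * ofSubtype d := by
  ext x
  by_cases hx : p x
  · simp [subtypeCongr.left_apply _ _ hx, ofSubtype_apply_of_mem _ hx,
      ofSubtype_apply_of_not_mem d (not_not_intro hx)]
  · simp [subtypeCongr.right_apply _ _ hx, ofSubtype_apply_of_mem d hx,
      ofSubtype_apply_of_not_mem c (d ⟨x, hx⟩).2]

theorem disjoint_ofSubtype_ofSubtype_compl : Disjoint (ofSubtype c) (ofSubtype d) := fun x => by
  by_cases hx : p x
  · exact .inr (ofSubtype_apply_of_not_mem d (not_not_intro hx))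
  · exact .inl (ofSubtype_apply_of_not_mem c hx)

-- The `Fintype` instances on the subtypes are left arbitrary so that the lemma also applies to
-- `Finset` coercions, whose instance is not the one `Subtype.fintype` builds.
theorem parts_partition_subtypeCongr [Fintype α] [DecidableEq α] [Fintype {x // p x}]
    [Fintype {x // ¬p x}] :
    (c.subtypeCongr d).partition.parts = c.partition.parts + d.partition.parts := by
  obtain rfl : ‹Fintype {x // p x}› = Subtype.fintype p := Subsingleton.elim _ _
  obtain rfl : ‹Fintype {x // ¬p x}› = Subtype.fintype _ := Subsingleton.elim _ _
  have hdisj := disjoint_ofSubtype_ofSubtype_compl c d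
  have hcard : Fintype.card α = Fintype.card {x // p x} + Fintype.card {x // ¬p x} := by
    rw [Fintype.card_subtype_compl, Nat.add_sub_cancel' (Fintype.card_subtype_le p)]
  have hc : #c.support ≤ Fintype.card {x // p x} := card_le_univ _
  have hd : #d.support ≤ Fintype.card {x // ¬p x} := card_le_univ _
  simp only [parts_partition, subtypeCongr_eq_ofSubtype_mul_ofSubtype, hdisj.cycleType_mul,
    hdisj.card_support_mul, cycleType_ofSubtype, support_ofSubtype, card_map]
  rw [hcard, show Fintype.card {x // p x} + Fintype.card {x // ¬p x} - (#c.support + #d.support)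
    = (Fintype.card {x // p x} - #c.support) + (Fintype.card {x // ¬p x} - #d.support) by omega,
    Multiset.replicate_add]
  abel

end Subtype

variable {α β : Type*} [Fintype α] [DecidableEq α] [Fintype β] [DecidableEq β]

theorem parts_partition_permCongr (e : α ≃ β) (σ : Perm α) :
    (e.permCongr σ).partition.parts = σ.partition.parts := by
  have h : e.permCongr σ = σ.extendDomain (e.trans (subtypeUnivEquiv fun _ => trivial).symm) := by
    ext x
    simp [extendDomain, permCongr_apply]
  rw [parts_partition, parts_partition, h, cycleType_extendDomain, card_support_extend_domain,
    Fintype.card_congr e]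

theorem isCycleOn_univ_iff_cycleType_eq (hβ : 2 ≤ Fintype.card β) {c : Perm β} :
    c.IsCycleOn _root_.Set.univ ↔ c.cycleType = {Fintype.card β} := by
  have hnt : (_root_.Set.univ : Set β).Nontrivial :=
    _root_.Set.nontrivial_univ_iff.mpr (Fintype.one_lt_card_iff_nontrivial.mp hβ)
  constructor
  · intro hc
    have hcyc : c.IsCycle := isCycle_iff_exists_isCycleOn.mpr ⟨_, hnt, hc, fun _ _ => trivial⟩
    have hsupp : c.support = univ := eq_univ_of_forall fun x =>
      mem_support.mpr (hc.apply_ne hnt (_root_.Set.mem_univ x))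
    rw [hcyc.cycleType, hsupp, Finset.card_univ]
  · intro hc
    have hcyc : c.IsCycle := card_cycleType_eq_one.mp (by rw [hc, Multiset.card_singleton])
    have hsupp : c.support = univ :=
      eq_univ_of_card _ (by rw [← sum_cycleType, hc, Multiset.sum_singleton])
    convert hcyc.isCycleOn
    ext x
    simpa using (Finset.ext_iff.mp hsupp x).symm

theorem parts_partition_of_isCycleOn_univ [Nonempty β] {c : Perm β}
    (hc : c.IsCycleOn _root_.Set.univ) : c.partition.parts = {Fintype.card β} := by
  rcases (Nat.one_le_iff_ne_zero.mpr (Fintype.card_ne_zero (α := β))).eq_or_lt with h1 | h2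
  · have : Subsingleton β := Fintype.card_le_one_iff_subsingleton.mp h1.ge
    rw [Subsingleton.elim c 1, parts_partition, cycleType_one, support_one, ← h1]
    rfl
  · rw [parts_partition, (isCycleOn_univ_iff_cycleType_eq h2).mp hc, ← sum_cycleType,
      (isCycleOn_univ_iff_cycleType_eq h2).mp hc, Multiset.sum_singleton, Nat.sub_self,
      Multiset.replicate_zero, add_zero]

open scoped Classical in
theorem card_filter_isCycleOn_univ [Nonempty β] :
    #{c : Perm β | c.IsCycleOn _root_.Set.univ} = (Fintype.card β - 1)! := by
  rcases (Nat.one_le_iff_ne_zero.mpr (Fintype.card_ne_zero (α := β))).eq_or_lt with h1 | h2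
  · have : Subsingleton β := Fintype.card_le_one_iff_subsingleton.mp h1.ge
    rw [filter_true_of_mem fun c _ => isCycleOn_of_subsingleton c _, Finset.card_univ,
      Fintype.card_perm, ← h1]
    rfl
  · rw [filter_congr fun c _ => isCycleOn_univ_iff_cycleType_eq h2,
      card_of_cycleType_singleton h2 le_rfl, Nat.choose_self, mul_one]

theorem filter_sameCycle_eq_iff_isCycleOn {σ : Perm α} {z : α} {s : Finset α} (hz : z ∈ s) :
    ({x | σ.SameCycle z x} : Finset α) = s ↔ σ.IsCycleOn s := by
  constructor
  · intro hs
    simp only [Finset.ext_iff, mem_filter, mem_univ, true_and] at hs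
    refine ⟨Equiv.bijOn σ fun x => ?_, fun x hx y hy => ?_⟩
    · simp only [mem_coe, ← hs, sameCycle_apply_right]
    · exact ((hs x).mpr hx).symm.trans ((hs y).mpr hy)
  · intro hσ
    ext x
    simp only [mem_filter, mem_univ, true_and]
    refine ⟨?_, fun hx => hσ.2 hz hx⟩
    rintro ⟨i, rfl⟩
    exact (hσ.1.perm_zpow i).mapsTo hz

open scoped Classical in
theorem sum_perm_eq_sum_sum_isCycleOn {M : Type*} [AddCommMonoid M] (f : Perm α → M) (z : α) :
    ∑ σ, f σ = ∑ s : Finset α with z ∈ s, ∑ σ with σ.IsCycleOn s, f σ := by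
  have hz (σ : Perm α) : ({x | σ.SameCycle z x} : Finset α) ∈ ({s | z ∈ s} : Finset _) := by
    simp [SameCycle.refl]
  rw [← sum_fiberwise_of_maps_to (g := fun σ : Perm α => ({x | σ.SameCycle z x} : Finset α))
    (t := ({s | z ∈ s} : Finset (Finset α))) fun σ _ => hz σ]
  refine sum_congr rfl fun s hs => ?_
  rw [filter_congr fun σ _ => filter_sameCycle_eq_iff_isCycleOn (mem_filter.mp hs).2]

open scoped Classical in
theorem sum_isCycleOn_eq_sum_subtypeCongr {M : Type*} [AddCommMonoid M] (f : Perm α → M)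
    (s : Finset α) :
    ∑ σ with σ.IsCycleOn s, f σ =
      ∑ c : Perm s with c.IsCycleOn _root_.Set.univ, ∑ d : Perm {x // x ∉ s},
        f (c.subtypeCongr d) := by
  have hinv (c : Perm s) (d : Perm {x // x ∉ s}) (x : α) : c.subtypeCongr d x ∈ s ↔ x ∈ s := by
    by_cases hx : x ∈ s
    · simp [subtypeCongr.left_apply _ _ hx, hx]
    · simp [subtypeCongr.right_apply _ _ hx, hx, (d ⟨x, hx⟩).2]
  have hcyc (c : Perm s) (d : Perm {x // x ∉ s}) :
      (c.subtypeCongr d).IsCycleOn s ↔ c.IsCycleOn _root_.Set.univ := by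
    rw [isCycleOn_iff_isCycleOn_univ_subtypePerm (hinv c d), subtypePerm_subtypeCongr]
  rw [← sum_product']
  symm
  refine sum_bij (fun cd _ => cd.1.subtypeCongr cd.2) (fun cd hcd => ?_)
    (fun cd _ cd' _ h => subtypeCongrHom_injective _ h) (fun σ hσ => ?_) fun _ _ => rfl
  · simpa [hcyc] using hcd
  · have hσ' := (mem_filter.mp hσ).2
    refine ⟨(σ.subtypePerm fun _ => hσ'.apply_mem_iff,
      σ.subtypePerm fun _ => not_congr hσ'.apply_mem_iff), ?_,
      subtypeCongr_subtypePerm σ fun _ => hσ'.apply_mem_iff⟩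
    exact mem_product.mpr ⟨mem_filter.mpr ⟨mem_univ _, hσ'.subtypePerm⟩, mem_univ _⟩

variable {R : Type*} [CommSemiring R] (a : ℕ → R)

/-- `n!` times the cycle index of `Perm α` (with `n = card α`), evaluated at `p_m = a m`. -/
noncomputable def cycleIndexSum (α : Type*) [Fintype α] [DecidableEq α] : R :=
  ∑ σ : Perm α, (σ.partition.parts.map a).prod

theorem cycleIndexSum_congr (e : α ≃ β) : cycleIndexSum a α = cycleIndexSum a β :=
  Fintype.sum_equiv e.permCongr _ _ fun σ => by rw [parts_partition_permCongr]

theorem cycleIndexSum_of_isEmpty [IsEmpty α] : cycleIndexSum a α = 1 := by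
  simp [cycleIndexSum, Subsingleton.elim _ (1 : Perm α), parts_partition]

theorem cycleIndexSum_eq_sum_filter_mem (z : α) :
    cycleIndexSum a α =
      ∑ s : Finset α with z ∈ s, (#s - 1)! • (a #s * cycleIndexSum a {x // x ∉ s}) := by
  rw [cycleIndexSum, sum_perm_eq_sum_sum_isCycleOn _ z]
  refine sum_congr rfl fun s hs => ?_
  have : Nonempty s := ⟨⟨z, (mem_filter.mp hs).2⟩⟩
  have hweight (c : Perm s) (hc : c.IsCycleOn _root_.Set.univ) (d : Perm {x // x ∉ s}) :
      ((c.subtypeCongr d).partition.parts.map a).prod = a #s * (d.partition.parts.map a).prod := by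
    rw [parts_partition_subtypeCongr, parts_partition_of_isCycleOn_univ hc, Fintype.card_coe,
      Multiset.map_add, Multiset.prod_add, Multiset.map_singleton, Multiset.prod_singleton]
  classical
  rw [sum_isCycleOn_eq_sum_subtypeCongr, cycleIndexSum, mul_sum,
    sum_congr rfl fun c hc => sum_congr rfl fun d _ => hweight c (mem_filter.mp hc).2 d,
    sum_const, card_filter_isCycleOn_univ, Fintype.card_coe]

theorem cycleIndexSum_fin_succ (n : ℕ) :
    cycleIndexSum a (Fin (n + 1)) =
      ∑ k ∈ range (n + 1), n.descFactorial k • (a (k + 1) * cycleIndexSum a (Fin (n - k))) := by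
  have hcompl (s : Finset (Fin (n + 1))) :
      cycleIndexSum a {x // x ∉ s} = cycleIndexSum a (Fin (n + 1 - #s)) :=
    cycleIndexSum_congr a (Fintype.equivFinOfCardEq (by
      rw [Fintype.card_subtype_compl, Fintype.card_coe, Fintype.card_fin]))
  rw [cycleIndexSum_eq_sum_filter_mem a 0]
  simp_rw [hcompl]
  rw [sum_filter_mem_eq_sum_range_choose 0
    fun m => (m - 1)! • (a m * cycleIndexSum a (Fin (n + 1 - m)))]
  refine sum_congr (by rw [Fintype.card_fin]) fun k _ => ?_
  simp only [Fintype.card_fin, Nat.add_sub_cancel]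
  rw [Nat.add_sub_add_right, smul_smul, descFactorial_eq_factorial_mul_choose, mul_comm]

end Equiv.Perm

namespace PowerSeries

theorem coeff_pow_eq_zero_of_lt {R : Type*} [CommSemiring R] {g : R⟦X⟧}
    (hg : constantCoeff g = 0) {n k : ℕ} (h : n < k) : coeff n (g ^ k) = 0 := by
  obtain ⟨g, rfl⟩ := X_dvd_iff.mpr hg
  rw [mul_pow, coeff_X_pow_mul', if_neg h.not_ge]

variable {K : Type*} [Field K]

noncomputable def expPartialSum (g : K⟦X⟧) (N : ℕ) : K⟦X⟧ :=
  ∑ k ∈ range N, (k ! : K)⁻¹ • g ^ k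

variable {g : K⟦X⟧}

theorem coeff_expPartialSum_of_lt (hg : constantCoeff g = 0) {n N : ℕ} (h : n < N) :
    coeff n (expPartialSum g N) = coeff n (expPartialSum g (n + 1)) := by
  simp only [expPartialSum, map_sum]
  refine (sum_subset (range_subset_range.mpr h) fun k hkN hk => ?_).symm
  rw [map_smul, coeff_pow_eq_zero_of_lt hg (by simpa using hk), smul_zero]

variable [CharZero K]

theorem derivative_expPartialSum_succ (g : K⟦X⟧) (N : ℕ) :
    d⁄dX K (expPartialSum g (N + 1)) = d⁄dX K g * expPartialSum g N := by
  simp only [expPartialSum, map_sum, mul_sum]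
  rw [sum_range_succ', pow_zero, Derivation.map_smul, derivative_one, smul_zero, add_zero]
  refine sum_congr rfl fun k _ => ?_
  have hfact : ((k + 1)! : K)⁻¹ * (k + 1 : ℕ) = (k ! : K)⁻¹ := by
    rw [factorial_succ, Nat.cast_mul]
    field_simp
  rw [Derivation.map_smul, Derivation.leibniz_pow, Nat.add_sub_cancel, ← Nat.cast_smul_eq_nsmul K,
    smul_smul, hfact, smul_eq_mul, mul_comm, mul_smul_comm]

theorem succ_mul_coeff_expPartialSum (hg : constantCoeff g = 0) (n : ℕ) :
    (n + 1) * coeff (n + 1) (expPartialSum g (n + 2)) =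
      ∑ k ∈ range (n + 1), coeff k (d⁄dX K g) * coeff (n - k) (expPartialSum g (n - k + 1)) := by
  rw [mul_comm, ← coeff_derivative, derivative_expPartialSum_succ, coeff_mul,
    Nat.sum_antidiagonal_eq_sum_range_succ fun i j =>
      coeff i (d⁄dX K g) * coeff j (expPartialSum g (n + 1))]
  exact sum_congr rfl fun k _ => by rw [coeff_expPartialSum_of_lt hg (by omega)]

end PowerSeries

open Equiv.Perm

theorem prod_Icc_pow_cycleCount {M : Type*} [CommMonoid M] (a : ℕ → M) {n : ℕ}
    (σ : Equiv.Perm (Fin n)) :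
    ∏ m ∈ Icc 1 n, a m ^ cycleCount σ m = (σ.partition.parts.map a).prod := by
  have hparts : fullCycleType σ = σ.partition.parts := by
    rw [fullCycleType, parts_partition, sum_cycleType, Fintype.card_fin]
  rw [prod_multiset_map_count, ← hparts]
  refine (prod_subset (fun m hm => ?_) fun m _ hm => ?_).symm
  · have hm := Multiset.mem_toFinset.mp hm
    rw [hparts] at hm
    refine mem_Icc.mpr ⟨σ.partition.parts_pos hm, ?_⟩
    simpa [σ.partition.parts_sum] using Multiset.le_sum_of_mem hm
  · rw [cycleCount, Multiset.count_eq_zero_of_notMem (mt Multiset.mem_toFinset.mpr hm), pow_zero]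

theorem cycleIndexSum_fin_eq_factorial_mul_coeff_expPartialSum {K : Type*} [Field K] [CharZero K]
    (a : ℕ → K) (n : ℕ) :
    cycleIndexSum a (Fin n) =
      n ! * coeff n (expPartialSum (mk fun m => if m = 0 then 0 else a m / m) (n + 1)) := by
  set g : K⟦X⟧ := mk fun m => if m = 0 then 0 else a m / m
  have hg : constantCoeff g = 0 := by simp [g, ← coeff_zero_eq_constantCoeff_apply]
  have hdg (k : ℕ) : coeff k (d⁄dX K g) = a (k + 1) := by
    rw [coeff_derivative, coeff_mk, if_neg k.succ_ne_zero, Nat.cast_add_one,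
      div_mul_cancel₀ _ k.cast_add_one_ne_zero]
  induction n using Nat.strong_induction_on with
  | _ n ih =>
    rcases n with _ | n
    · simp [cycleIndexSum_of_isEmpty, expPartialSum]
    rw [cycleIndexSum_fin_succ, factorial_succ, Nat.cast_mul, Nat.cast_add_one,
      mul_comm _ (n ! : K), mul_assoc, succ_mul_coeff_expPartialSum hg, mul_sum]
    refine sum_congr rfl fun k hk => ?_
    have hkn : k ≤ n := Nat.lt_succ_iff.mp (mem_range.mp hk)
    rw [ih (n - k) (by omega), hdg, nsmul_eq_mul, ← factorial_mul_descFactorial hkn, Nat.cast_mul]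
    ring

/-- The cycle index theorem, stated coefficientwise:
`∑_{σ ∈ S_n} ∏_m a_m^{C_m(σ)} = n! [t^n] exp(∑_{m ≥ 1} (a_m/m) t^m)`, where the
`n`-th coefficient of the exponential of a series `g` with zero constant term is
the `n`-th coefficient of `∑_{k=0}^n g^k / k!`. -/
theorem cycle_index_theorem (a : ℕ → ℂ) (n : ℕ) :
    ∑ σ : Equiv.Perm (Fin n), ∏ m ∈ Finset.Icc 1 n, a m ^ cycleCount σ m =
      (n ! : ℂ) *
        PowerSeries.coeff (R := ℂ) n
          (∑ k ∈ Finset.range (n + 1),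
            ((k ! : ℂ))⁻¹ • (PowerSeries.mk fun m => if m = 0 then 0 else a m / m) ^ k) := by
  simp_rw [prod_Icc_pow_cycleCount]
  exact cycleIndexSum_fin_eq_factorial_mul_coeff_expPartialSum a n
end

section
/- Under the weighted measure P_Θ^n on S_n with weights θ_m, the k-th factorial moment of the cycle count C_m satisfies E_Θ[(C_m)_k] = (θ_m/m)^k · h_{n−mk}/h_n whenever mk ≤ n, where (c)_k = c(c−1)···(c−k+1) and h_j is the normalization constant (with h_j := 0 for j < 0). -/
open Nat Finset

/-!
Write `w(σ) = ∏ θ_i ^ C_i(σ)`. Since `(c)_{k+1} = c (c-1)_k`, everything rests on the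
size-biasing identity
  `m · ∑_{σ ∈ S_n} C_m(σ) F(σ) = (n)_m · ∑_{τ ∈ S_{n-m}} F(τ + one m-cycle)`
for any function `F` of the cycle type. Indeed `m · C_m(σ)` counts the points `x` on `m`-cycles
of `σ` (those with `period σ x = m`), and such a pair `(σ, x)` amounts to an injective enumeration `x, σ x, …, σ^{m-1} x` of the
cycle (one of `(n)_m` embeddings `Fin m ↪ Fin n`) together with the permutation `σ` induces on
the other `n - m` points. Adding the cycle multiplies the weight by `θ_m` and raises `C_m` by one,
so `k` applications give `m^k ∑_σ w(σ) (C_m(σ))_k = θ_m^k (n)_{mk} ∑_{τ ∈ S_{n-mk}} w(τ)`, and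
`∑_{τ ∈ S_j} w(τ) = j! h_j`.
-/

open Equiv Equiv.Perm MulAction

namespace Equiv.Perm

section Period

variable {α : Type*} {σ : Perm α} {x : α} {m : ℕ}

lemma pow_apply_eq_pow_apply_of_lt_period {i j : ℕ} (hi : i < period σ x) (hj : j < period σ x)
    (h : (σ ^ i) x = (σ ^ j) x) : i = j := by
  rw [← Perm.smul_def, ← Perm.smul_def, ← smul_iterate_apply, ← smul_iterate_apply] at h
  exact (Function.iterate_eq_iterate_iff_of_lt_minimalPeriod hi hj).1 h

lemma period_pos [Finite α] (σ : Perm α) (x : α) : 0 < period σ x :=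
  period_pos_of_orderOf_pos (orderOf_pos σ) x

variable [Fintype α] [DecidableEq α]

lemma period_eq_card_support_cycleOf (hx : σ x ≠ x) : period σ x = #(σ.cycleOf x).support := by
  have hcyc := σ.isCycleOn_support_cycleOf x
  have hmem : x ∈ (σ.cycleOf x).support := mem_support_cycleOf_iff.2 ⟨.refl _ _, mem_support.2 hx⟩
  refine Nat.dvd_antisymm (pow_smul_eq_iff_period_dvd.1 ((hcyc.pow_apply_eq hmem).2 dvd_rfl)) ?_
  exact (hcyc.pow_apply_eq hmem).1 (pow_period_smul σ x)

lemma filter_period_eq_one : ({x | period σ x = 1} : Finset α) = σ.supportᶜ := by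
  ext x
  simp [period_eq_one_iff, Perm.smul_def]

lemma filter_period_eq_of_two_le (hm : 2 ≤ m) :
    ({x | period σ x = m} : Finset α) =
      ({c ∈ σ.cycleFactorsFinset | #c.support = m}).biUnion support := by
  ext x
  simp only [mem_filter, mem_univ, true_and, mem_biUnion]
  constructor
  · intro hx
    have hσx : σ x ≠ x := fun h => by
      rw [← Perm.smul_def, ← period_eq_one_iff] at h; omega
    exact ⟨σ.cycleOf x, ⟨cycleOf_mem_cycleFactorsFinset_iff.2 (mem_support.2 hσx),
      (period_eq_card_support_cycleOf hσx).symm.trans hx⟩,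
      mem_support_cycleOf_iff.2 ⟨.refl _ _, mem_support.2 hσx⟩⟩
  · rintro ⟨c, ⟨hc, hcard⟩, hxc⟩
    have hσx : σ x ≠ x := mem_support.1 (mem_cycleFactorsFinset_support_le hc hxc)
    rw [period_eq_card_support_cycleOf hσx, ← cycle_is_cycleOf hxc hc, hcard]

lemma card_filter_period_eq (hm : 1 ≤ m) :
    #({x | period σ x = m} : Finset α) = m * σ.partition.parts.count m := by
  rcases hm.eq_or_lt with rfl | hm
  · rw [filter_period_eq_one, card_compl, parts_partition, Multiset.count_add,
      Multiset.count_replicate_self, Multiset.count_eq_zero_of_notMem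
        (fun h => (one_lt_of_mem_cycleType h).ne rfl), zero_add, one_mul]
  · rw [filter_period_eq_of_two_le hm, card_biUnion, sum_congr rfl (fun c hc => (mem_filter.1 hc).2),
      sum_const, smul_eq_mul, mul_comm, parts_partition, Multiset.count_add,
      Multiset.count_replicate, if_neg hm.ne, add_zero, cycleType_def, Multiset.count_map]
    · simp only [Function.comp_apply, eq_comm (a := m)]
      rfl
    · intro c hc d hd hcd
      exact (σ.cycleFactorsFinset_pairwise_disjoint (mem_filter.1 hc).1 (mem_filter.1 hd).1
        hcd).disjoint_support

end Period

section OrbitEmbedding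

variable {α : Type*} {σ : Perm α} {x : α} {m : ℕ}

def orbitEmbedding (σ : Perm α) (x : α) (hx : period σ x = m) : Fin m ↪ α :=
  ⟨fun i => (σ ^ (i : ℕ)) x, fun i j hij =>
    Fin.ext (pow_apply_eq_pow_apply_of_lt_period (hx ▸ i.2) (hx ▸ j.2) hij)⟩

lemma orbitEmbedding_apply (hx : period σ x = m) (i : Fin m) :
    orbitEmbedding σ x hx i = (σ ^ (i : ℕ)) x := rfl

variable [Fintype α]

lemma mem_map_orbitEmbedding (hx : period σ x = m) {y : α} :
    y ∈ univ.map (orbitEmbedding σ x hx) ↔ σ.SameCycle x y := by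
  simp only [mem_map, mem_univ, true_and, orbitEmbedding_apply]
  constructor
  · rintro ⟨i, rfl⟩
    exact ⟨i, by rw [zpow_natCast]⟩
  · intro hxy
    obtain ⟨i, -, rfl⟩ := hxy.exists_pow_eq'
    refine ⟨⟨i % m, Nat.mod_lt _ (hx ▸ period_pos σ x)⟩, ?_⟩
    simpa only [Perm.smul_def, hx] using pow_mod_period_smul i (m := σ) (a := x)

lemma map_orbitEmbedding_compl_invariant [DecidableEq α] (hx : period σ x = m) (y : α) :
    σ y ∈ (univ.map (orbitEmbedding σ x hx))ᶜ ↔ y ∈ (univ.map (orbitEmbedding σ x hx))ᶜ := by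
  simp only [mem_compl, mem_map_orbitEmbedding, sameCycle_apply_right]

end OrbitEmbedding

end Equiv.Perm

lemma fullCycleType_eq_parts_partition {n : ℕ} (σ : Perm (Fin n)) :
    fullCycleType σ = σ.partition.parts := by
  rw [fullCycleType, parts_partition, sum_cycleType, Fintype.card_fin]

section InsertCycle

variable {m n : ℕ}

lemma val_finRotate (j : Fin m) : (finRotate m j : ℕ) = (j + 1) % m := by
  have := j.neZero
  rw [finRotate_apply, Fin.val_add, Fin.val_one', Nat.add_mod_mod]

noncomputable def rangeEquiv (g : Fin m ↪ Fin n) : Fin m ≃ ↥(univ.map g) :=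
  (Equiv.ofInjective g g.injective).trans (Equiv.subtypeEquivRight (by simp))

def complEquiv (g : Fin m ↪ Fin n) : Fin (n - m) ≃ ↥(univ.map g)ᶜ :=
  ((univ.map g)ᶜ.orderIsoOfFin (by simp [card_compl])).toEquiv

/-- The permutation with the cycle `g 0 ↦ g 1 ↦ ⋯ ↦ g (m - 1) ↦ g 0` that acts on the complement
of the range of `g`, enumerated increasingly by `Fin (n - m)`, as `τ`. -/
noncomputable def insertCycle (g : Fin m ↪ Fin n) (τ : Perm (Fin (n - m))) : Perm (Fin n) :=
  (finRotate m).extendDomain (rangeEquiv g) * τ.extendDomain (complEquiv g)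

variable (g : Fin m ↪ Fin n) (τ : Perm (Fin (n - m)))

lemma insertCycle_apply_embedding (j : Fin m) : insertCycle g τ (g j) = g (finRotate m j) := by
  have hj : g j ∉ (univ.map g)ᶜ := by simp
  rw [insertCycle, Perm.mul_apply, extendDomain_apply_not_subtype _ _ hj]
  exact extendDomain_apply_image _ (rangeEquiv g) j

lemma insertCycle_apply_of_mem_compl {y : Fin n} (hy : y ∈ (univ.map g)ᶜ) :
    insertCycle g τ y = complEquiv g (τ ((complEquiv g).symm ⟨y, hy⟩)) := by
  rw [insertCycle, Perm.mul_apply, extendDomain_apply_subtype _ _ hy]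
  exact extendDomain_apply_not_subtype _ _ (mem_compl.1 (complEquiv g _).2)

lemma insertCycle_pow_apply (hm : 1 ≤ m) (i : ℕ) :
    (insertCycle g τ ^ i) (g ⟨0, hm⟩) = g ⟨i % m, Nat.mod_lt _ hm⟩ := by
  induction i with
  | zero => simp
  | succ i ih =>
    rw [_root_.pow_succ', Perm.mul_apply, ih, insertCycle_apply_embedding]
    congr 1
    ext
    rw [val_finRotate, Nat.mod_add_mod]

lemma period_insertCycle (hm : 1 ≤ m) : period (insertCycle g τ) (g ⟨0, hm⟩) = m := by
  have hfix (i : ℕ) : (insertCycle g τ ^ i) • g ⟨0, hm⟩ = g ⟨0, hm⟩ ↔ m ∣ i := by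
    rw [Perm.smul_def, insertCycle_pow_apply, g.injective.eq_iff, Fin.mk.injEq,
      Nat.dvd_iff_mod_eq_zero]
  exact Nat.dvd_antisymm (pow_smul_eq_iff_period_dvd.1 ((hfix m).2 dvd_rfl))
    ((hfix _).1 (pow_period_smul _ _))

lemma cycleType_insertCycle :
    (insertCycle g τ).cycleType = (finRotate m).cycleType + τ.cycleType := by
  have hdisj : Disjoint ((finRotate m).extendDomain (rangeEquiv g))
      (τ.extendDomain (complEquiv g)) := by
    intro y
    by_cases hy : y ∈ univ.map g
    · exact .inr (extendDomain_apply_not_subtype _ _ (by simpa using hy))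
    · exact .inl (extendDomain_apply_not_subtype _ _ hy)
  rw [insertCycle, hdisj.cycleType_mul, cycleType_extendDomain, cycleType_extendDomain]

lemma fullCycleType_insertCycle (hm : 1 ≤ m) :
    fullCycleType (insertCycle g τ) = m ::ₘ fullCycleType τ := by
  have hmn : m ≤ n := by simpa using Fintype.card_le_of_embedding g
  have hτ : τ.cycleType.sum ≤ n - m := by
    simpa [sum_cycleType] using τ.support.card_le_univ
  rw [fullCycleType, fullCycleType, cycleType_insertCycle, Multiset.sum_add]
  rcases hm.eq_or_lt with rfl | hm
  · rw [Subsingleton.elim (finRotate 1) 1, cycleType_one, zero_add, Multiset.sum_zero, zero_add,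
      show n - τ.cycleType.sum = (n - 1 - τ.cycleType.sum) + 1 by omega,
      Multiset.replicate_succ, Multiset.add_cons]
  · rw [cycleType_finRotate_of_le hm, Multiset.sum_singleton, Multiset.singleton_add,
      Multiset.cons_add, show n - (m + τ.cycleType.sum) = n - m - τ.cycleType.sum by omega]

end InsertCycle

section InsertCycleEquiv

variable {m n : ℕ}

def restrictCompl (σ : Perm (Fin n)) (g : Fin m ↪ Fin n)
    (hg : ∀ y, σ y ∈ (univ.map g)ᶜ ↔ y ∈ (univ.map g)ᶜ) : Perm (Fin (n - m)) :=
  (complEquiv g).symm.permCongr (σ.subtypePerm hg)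

lemma complEquiv_restrictCompl {σ : Perm (Fin n)} {g : Fin m ↪ Fin n}
    (hg : ∀ y, σ y ∈ (univ.map g)ᶜ ↔ y ∈ (univ.map g)ᶜ) (z : Fin (n - m)) :
    (complEquiv g (restrictCompl σ g hg z) : Fin n) = σ (complEquiv g z) := by
  rw [restrictCompl, permCongr_apply, symm_symm, apply_symm_apply]
  rfl

-- Stated for `g' = g` because the invariance proof `hinv` mentions `g'`, which in use is only
-- propositionally equal to `g`.
lemma restrictCompl_insertCycle {g g' : Fin m ↪ Fin n} (τ : Perm (Fin (n - m))) (hg : g' = g)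
    (hinv : ∀ y, insertCycle g τ y ∈ (univ.map g')ᶜ ↔ y ∈ (univ.map g')ᶜ) :
    restrictCompl (insertCycle g τ) g' hinv = τ := by
  subst g'
  ext z
  have h := complEquiv_restrictCompl hinv z
  rw [insertCycle_apply_of_mem_compl g τ (complEquiv g z).2, Subtype.coe_eta,
    symm_apply_apply] at h
  rw [(complEquiv g).injective (Subtype.coe_injective h)]

lemma insertCycle_orbitEmbedding_restrictCompl {σ : Perm (Fin n)} {x : Fin n}
    (hx : period σ x = m) :
    insertCycle (orbitEmbedding σ x hx)
      (restrictCompl σ _ (map_orbitEmbedding_compl_invariant hx)) = σ := by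
  ext y : 1
  by_cases hy : y ∈ univ.map (orbitEmbedding σ x hx)
  · obtain ⟨i, -, rfl⟩ := mem_map.1 hy
    rw [insertCycle_apply_embedding, orbitEmbedding_apply, orbitEmbedding_apply, val_finRotate,
      ← Perm.mul_apply, ← _root_.pow_succ']
    simpa only [Perm.smul_def, hx] using pow_mod_period_smul (i + 1 : ℕ) (m := σ) (a := x)
  · have hy' := mem_compl.2 hy
    rw [insertCycle_apply_of_mem_compl _ _ hy', complEquiv_restrictCompl, apply_symm_apply]

noncomputable def insertCycleEquiv (hm : 1 ≤ m) :
    (Fin m ↪ Fin n) × Perm (Fin (n - m)) ≃ {p : Perm (Fin n) × Fin n // period p.1 p.2 = m} where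
  toFun gτ := ⟨(insertCycle gτ.1 gτ.2, gτ.1 ⟨0, hm⟩), period_insertCycle gτ.1 gτ.2 hm⟩
  invFun p := (orbitEmbedding p.1.1 p.1.2 p.2,
    restrictCompl p.1.1 _ (map_orbitEmbedding_compl_invariant p.2))
  left_inv := by
    rintro ⟨g, τ⟩
    have hg : orbitEmbedding _ _ (period_insertCycle g τ hm) = g := by
      ext i : 1
      rw [orbitEmbedding_apply, insertCycle_pow_apply]
      exact congrArg g (Fin.ext (Nat.mod_eq_of_lt i.2))
    exact Prod.ext hg (restrictCompl_insertCycle τ hg _)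
  right_inv := by
    rintro ⟨⟨σ, x⟩, hx⟩
    refine Subtype.ext (Prod.ext (insertCycle_orbitEmbedding_restrictCompl hx) ?_)
    simp [orbitEmbedding_apply]

end InsertCycleEquiv

lemma sum_card_filter_smul_eq_sum_subtype {ι κ M : Type*} [Fintype ι] [Fintype κ]
    [AddCommMonoid M] (P : ι → κ → Prop) [DecidableRel P] (f : ι → M) :
    ∑ a, #({b | P a b} : Finset κ) • f a = ∑ p : {p : ι × κ // P p.1 p.2}, f p.1.1 := by
  rw [← sum_subtype (univ.filter fun p : ι × κ => P p.1 p.2) (by simp) (fun p => f p.1),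
    sum_filter, Fintype.sum_prod_type]
  refine sum_congr rfl fun a _ => ?_
  rw [← sum_filter]
  exact (sum_const (f a)).symm

theorem sum_cycleCount_smul {M : Type*} [AddCommMonoid M] {n m : ℕ} (hm : 1 ≤ m)
    (F : Multiset ℕ → M) :
    m • ∑ σ : Perm (Fin n), cycleCount σ m • F (fullCycleType σ)
      = n.descFactorial m • ∑ τ : Perm (Fin (n - m)), F (m ::ₘ fullCycleType τ) := by
  calc m • ∑ σ : Perm (Fin n), cycleCount σ m • F (fullCycleType σ)
      = ∑ σ : Perm (Fin n), #({x | period σ x = m} : Finset (Fin n)) • F (fullCycleType σ) := by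
        simp only [smul_sum, smul_smul, card_filter_period_eq hm, cycleCount,
          fullCycleType_eq_parts_partition]
    _ = ∑ p : {p : Perm (Fin n) × Fin n // period p.1 p.2 = m}, F (fullCycleType p.1.1) :=
        sum_card_filter_smul_eq_sum_subtype (fun σ x => period σ x = m) _
    _ = ∑ gτ : (Fin m ↪ Fin n) × Perm (Fin (n - m)), F (m ::ₘ fullCycleType gτ.2) := by
        rw [← (insertCycleEquiv hm).sum_comp]
        exact sum_congr rfl fun gτ _ => congrArg F (fullCycleType_insertCycle gτ.1 gτ.2 hm)
    _ = n.descFactorial m • ∑ τ : Perm (Fin (n - m)), F (m ::ₘ fullCycleType τ) := by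
        simp only [Fintype.sum_prod_type, sum_const, Finset.card_univ, Fintype.card_embedding_eq,
          Fintype.card_fin]

lemma descFactorial_succ_eq_mul_pred (c k : ℕ) :
    c.descFactorial (k + 1) = c * (c - 1).descFactorial k := by
  cases c with
  | zero => simp
  | succ c => rw [succ_descFactorial_succ, Nat.add_sub_cancel]

section Moments

variable {R : Type*} [CommSemiring R] (θ : ℕ → R) {m : ℕ}

def cycleWeight (n : ℕ) (s : Multiset ℕ) : R := ∏ i ∈ Icc 1 n, θ i ^ s.count i

lemma cycleWeight_cons {n : ℕ} {s : Multiset ℕ} (hm : 1 ≤ m) (hmn : m ≤ n)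
    (hs : ∀ a ∈ s, a ≤ n - m) : cycleWeight θ n (m ::ₘ s) = θ m * cycleWeight θ (n - m) s := by
  have hvanish : ∀ i ∈ Icc 1 n, i ∉ Icc 1 (n - m) → θ i ^ s.count i = 1 := fun i hi hi' => by
    rw [Multiset.count_eq_zero_of_notMem fun h => hi' (mem_Icc.2 ⟨(mem_Icc.1 hi).1, hs i h⟩),
      pow_zero]
  calc cycleWeight θ n (m ::ₘ s)
      = ∏ i ∈ Icc 1 n, (if i = m then θ i else 1) * θ i ^ s.count i :=
        prod_congr rfl fun i _ => by
          rw [Multiset.count_cons]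
          split_ifs <;> ring
    _ = θ m * ∏ i ∈ Icc 1 n, θ i ^ s.count i := by
        rw [prod_mul_distrib, prod_ite_eq', if_pos (mem_Icc.2 ⟨hm, hmn⟩)]
    _ = θ m * cycleWeight θ (n - m) s := by
        rw [cycleWeight, prod_subset (Icc_subset_Icc_right (Nat.sub_le n m)) hvanish]

lemma cast_mul_sum_cycleWeight_descFactorial_succ {n : ℕ} (hm : 1 ≤ m) (hmn : m ≤ n) (k : ℕ) :
    (m : R) * ∑ σ : Perm (Fin n),
        cycleWeight θ n (fullCycleType σ) * ((cycleCount σ m).descFactorial (k + 1) : R)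
      = n.descFactorial m * θ m * ∑ τ : Perm (Fin (n - m)),
        cycleWeight θ (n - m) (fullCycleType τ) * ((cycleCount τ m).descFactorial k : R) := by
  have hbias := sum_cycleCount_smul (n := n) hm
    fun s => cycleWeight θ n s * ((s.count m - 1).descFactorial k : R)
  simp only [nsmul_eq_mul, Multiset.count_cons_self, Nat.add_sub_cancel] at hbias
  calc (m : R) * ∑ σ : Perm (Fin n),
        cycleWeight θ n (fullCycleType σ) * ((cycleCount σ m).descFactorial (k + 1) : R)
      = m * ∑ σ : Perm (Fin n), (cycleCount σ m : R) * (cycleWeight θ n (fullCycleType σ) *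
          (((fullCycleType σ).count m - 1).descFactorial k : R)) := by
        congr 1
        refine sum_congr rfl fun σ _ => ?_
        rw [descFactorial_succ_eq_mul_pred, cycleCount]
        push_cast
        ring
    _ = n.descFactorial m * ∑ τ : Perm (Fin (n - m)), cycleWeight θ n (m ::ₘ fullCycleType τ) *
          ((cycleCount τ m).descFactorial k : R) := hbias
    _ = n.descFactorial m * θ m * ∑ τ : Perm (Fin (n - m)),
          cycleWeight θ (n - m) (fullCycleType τ) * ((cycleCount τ m).descFactorial k : R) := by
        rw [mul_assoc]
        congr 1
        rw [mul_sum]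
        refine sum_congr rfl fun τ _ => ?_
        rw [cycleWeight_cons θ hm hmn fun a ha => ?_, mul_assoc]
        rw [fullCycleType_eq_parts_partition] at ha
        simpa using τ.partition.le_of_mem_parts ha

theorem pow_mul_sum_cycleWeight_descFactorial (hm : 1 ≤ m) {k n : ℕ} (hmk : m * k ≤ n) :
      (m : R) ^ k * ∑ σ : Perm (Fin n),
          cycleWeight θ n (fullCycleType σ) * ((cycleCount σ m).descFactorial k : R)
        = θ m ^ k * n.descFactorial (m * k) *
          ∑ τ : Perm (Fin (n - m * k)), cycleWeight θ (n - m * k) (fullCycleType τ) := by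
  induction k generalizing n with
  | zero => simp
  | succ k ih =>
    have hmn : m ≤ n := le_trans (Nat.le_mul_of_pos_right m k.succ_pos) hmk
    have hmk' : m * k ≤ n - m := by rw [Nat.mul_succ] at hmk; omega
    have hsub : n - m - m * k = n - m * (k + 1) := by rw [Nat.mul_succ]; omega
    have hdesc : ((n - m).descFactorial (m * k) * n.descFactorial m : R)
        = n.descFactorial (m * (k + 1)) := by
      rw [← Nat.cast_mul, ← descFactorial_mul_descFactorial (Nat.le_mul_of_pos_right m k.succ_pos),
        Nat.mul_succ, Nat.add_sub_cancel]
    calc (m : R) ^ (k + 1) * ∑ σ : Perm (Fin n),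
          cycleWeight θ n (fullCycleType σ) * ((cycleCount σ m).descFactorial (k + 1) : R)
        = n.descFactorial m * θ m * ((m : R) ^ k * ∑ τ : Perm (Fin (n - m)),
          cycleWeight θ (n - m) (fullCycleType τ) * ((cycleCount τ m).descFactorial k : R)) := by
          rw [pow_succ, mul_assoc, cast_mul_sum_cycleWeight_descFactorial_succ θ hm hmn]
          ring
      _ = θ m ^ (k + 1) * n.descFactorial (m * (k + 1)) *
          ∑ τ : Perm (Fin (n - m * (k + 1))),
            cycleWeight θ (n - m * (k + 1)) (fullCycleType τ) := by
          rw [ih hmk', hsub, ← hdesc]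
          ring

end Moments

theorem factorial_moment_cycleCount_general (θ : ℕ → ℝ) (h : ℕ → ℝ)
    (hh : ∀ j, h j = ((j ! : ℝ))⁻¹ *
      ∑ σ : Equiv.Perm (Fin j), ∏ i ∈ Finset.Icc 1 j, θ i ^ cycleCount σ i)
    (n m k : ℕ) (hm : 1 ≤ m) (hmk : m * k ≤ n) :
    (1 / (h n * (n ! : ℝ))) *
        ∑ σ : Equiv.Perm (Fin n),
          (∏ i ∈ Finset.Icc 1 n, θ i ^ cycleCount σ i) *
            ((cycleCount σ m).descFactorial k : ℝ)
      = (θ m / m) ^ k * h (n - m * k) / h n := by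
  have htotal (j : ℕ) : ∑ τ : Perm (Fin j), cycleWeight θ j (fullCycleType τ) = j ! * h j := by
    rw [hh j, ← mul_assoc, mul_inv_cancel₀ (by positivity), one_mul]
    rfl
  have hfac : ((n - m * k)! * n.descFactorial (m * k) : ℝ) = n ! := by
    exact_mod_cast factorial_mul_descFactorial hmk
  have hmoment := pow_mul_sum_cycleWeight_descFactorial θ hm hmk
  rw [htotal] at hmoment
  have hsum : ∑ σ : Perm (Fin n), (∏ i ∈ Icc 1 n, θ i ^ cycleCount σ i) *
      ((cycleCount σ m).descFactorial k : ℝ) = (θ m / m) ^ k * (n ! * h (n - m * k)) := by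
    have hm0 : (m : ℝ) ^ k ≠ 0 := by positivity
    change ∑ σ : Perm (Fin n), cycleWeight θ n (fullCycleType σ) * _ = _
    rw [div_pow, ← hfac, div_mul_eq_mul_div, eq_div_iff hm0]
    linear_combination hmoment
  have hfac_ne : (n ! : ℝ) ≠ 0 := by positivity
  rw [hsum]
  field_simp

/-- The `k`-th factorial moment of the cycle count `C_m` under the weighted
measure `P_Θ^n`: `E_Θ[(C_m)_k] = (θ_m/m)^k h_{n-mk}/h_n` for `mk ≤ n`. -/
theorem factorial_moment_cycleCount (θ : ℕ → ℝ) (hθ : ∀ m, 0 ≤ θ m) (h : ℕ → ℝ)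
    (hh : ∀ j, h j = ((j ! : ℝ))⁻¹ *
      ∑ σ : Equiv.Perm (Fin j), ∏ i ∈ Finset.Icc 1 j, θ i ^ cycleCount σ i)
    (n m k : ℕ) (hm : 1 ≤ m) (hmk : m * k ≤ n) (hn : h n ≠ 0) :
    (1 / (h n * (n ! : ℝ))) *
        ∑ σ : Equiv.Perm (Fin n),
          (∏ i ∈ Finset.Icc 1 n, θ i ^ cycleCount σ i) *
            ((cycleCount σ m).descFactorial k : ℝ)
      = (θ m / m) ^ k * h (n - m * k) / h n :=
  factorial_moment_cycleCount_general θ h hh n m k hm hmk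
end

section
/- For σ ∈ S_n, log O_n(σ) = ψ(n) − R_n(σ), where ψ(n) = Σ_{k=1}^n Λ(k) is the Chebyshev function and R_n(σ) = Σ_{k=1}^n Λ(k) 1_{D_{n,k}(σ)=0}, where D_{n,k}(σ) counts (with multiplicity) the cycles of σ whose length is divisible by k. -/
open Nat Finset

/-- `D_{n,k}(σ) = ∑_{m=1}^n C_m(σ) 1_{k ∣ m}`. -/
noncomputable def Dnk {n : ℕ} (σ : Equiv.Perm (Fin n)) (k : ℕ) : ℕ :=
  ∑ m ∈ Finset.Icc 1 n, cycleCount σ m * (if k ∣ m then 1 else 0)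

/-!
A prime power `k` divides the lcm of the cycle lengths iff it divides some cycle length, i.e. iff
`D_{n,k}(σ) ≠ 0`; every such `k` is at most `n`. Hence `log O_n(σ) = ∑_{d ∣ O_n(σ)} Λ(d)` is the
sum of `Λ(k)` over `k ≤ n` with `D_{n,k}(σ) ≠ 0`, which is `ψ(n) - R_n(σ)`.
-/

open ArithmeticFunction

theorem IsPrimePow.dvd_lcm_iff {k a b : ℕ} (hk : IsPrimePow k) :
    k ∣ a.lcm b ↔ k ∣ a ∨ k ∣ b := by
  rcases eq_or_ne a 0 with rfl | ha
  · simp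
  rcases eq_or_ne b 0 with rfl | hb
  · simp
  obtain ⟨p, e, hp, -, rfl⟩ := (isPrimePow_nat_iff k).mp hk
  simp only [hp.pow_dvd_iff_le_factorization ha, hp.pow_dvd_iff_le_factorization hb,
    hp.pow_dvd_iff_le_factorization (Nat.lcm_ne_zero ha hb), factorization_lcm ha hb,
    Finsupp.sup_apply, le_sup_iff]

theorem IsPrimePow.dvd_multiset_lcm_iff {k : ℕ} (hk : IsPrimePow k) (s : Multiset ℕ) :
    k ∣ s.lcm ↔ ∃ m ∈ s, k ∣ m := by
  induction s using Multiset.induction with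
  | empty => simpa using hk.ne_one
  | cons b s ih => simp [Multiset.lcm_cons, lcm_eq_nat_lcm, hk.dvd_lcm_iff, ih]

theorem sum_filter_dvd_vonMangoldt {L : ℕ} (hL : L ≠ 0) {S : Finset ℕ}
    (hS : ∀ d, d ∣ L → IsPrimePow d → d ∈ S) : ∑ k ∈ S with k ∣ L, Λ k = Real.log L := by
  rw [← vonMangoldt_sum]
  refine sum_subset (fun k hk => ?_) fun k hkL hkS => ?_
  · exact mem_divisors.mpr ⟨(mem_filter.mp hk).2, hL⟩
  · have hkL := dvd_of_mem_divisors hkL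
    refine vonMangoldt_eq_zero_iff.mpr fun hk => hkS ?_
    exact mem_filter.mpr ⟨hS k hkL hk, hkL⟩

section CycleType

variable {n : ℕ} (σ : Equiv.Perm (Fin n))

theorem sum_fullCycleType : (fullCycleType σ).sum = n := by
  have h : σ.cycleType.sum ≤ n := by
    simpa [Equiv.Perm.sum_cycleType] using σ.support.card_le_univ
  simp only [fullCycleType, Multiset.sum_add, Multiset.sum_replicate, smul_eq_mul, mul_one]
  omega

variable {σ}

theorem pos_of_mem_fullCycleType {m : ℕ} (hm : m ∈ fullCycleType σ) : 0 < m := by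
  rcases Multiset.mem_add.mp hm with h | h
  · exact (Equiv.Perm.two_le_of_mem_cycleType h).trans_lt' two_pos
  · simp [Multiset.eq_of_mem_replicate h]

theorem le_of_mem_fullCycleType {m : ℕ} (hm : m ∈ fullCycleType σ) : m ≤ n :=
  (Multiset.le_sum_of_mem hm).trans_eq (sum_fullCycleType σ)

theorem Dnk_ne_zero_iff {k : ℕ} : Dnk σ k ≠ 0 ↔ ∃ m ∈ fullCycleType σ, k ∣ m := by
  simp only [Dnk, cycleCount, ne_eq, sum_eq_zero_iff, not_forall, mem_Icc, mul_eq_zero,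
    Multiset.count_eq_zero, ite_eq_right_iff, one_ne_zero, imp_false, not_or, not_not]
  exact ⟨fun ⟨m, _, h⟩ => ⟨m, h⟩, fun ⟨m, hm, hkm⟩ =>
    ⟨m, ⟨pos_of_mem_fullCycleType hm, le_of_mem_fullCycleType hm⟩, hm, hkm⟩⟩

theorem lcm_fullCycleType_ne_zero : (fullCycleType σ).lcm ≠ 0 :=
  fun h => (pos_of_mem_fullCycleType ((Multiset.lcm_eq_zero_iff _).mp h)).ne' rfl

theorem Dnk_ne_zero_iff_dvd_lcm {k : ℕ} (hk : IsPrimePow k) :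
    Dnk σ k ≠ 0 ↔ k ∣ (fullCycleType σ).lcm := by
  rw [Dnk_ne_zero_iff, hk.dvd_multiset_lcm_iff]

theorem le_of_dvd_lcm_fullCycleType {k : ℕ} (hk : IsPrimePow k)
    (h : k ∣ (fullCycleType σ).lcm) : k ≤ n := by
  obtain ⟨m, hm, hkm⟩ := (hk.dvd_multiset_lcm_iff _).mp h
  exact (Nat.le_of_dvd (pos_of_mem_fullCycleType hm) hkm).trans (le_of_mem_fullCycleType hm)

end CycleType

/-- `log O_n(σ) = ψ(n) - R_n(σ)` with `ψ(n) = ∑_{k=1}^n Λ(k)` the Chebyshev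
function and `R_n(σ) = ∑_{k=1}^n Λ(k) 1_{D_{n,k}(σ) = 0}`. -/
theorem log_order_chebyshev {n : ℕ} (σ : Equiv.Perm (Fin n)) :
    Real.log ((fullCycleType σ).lcm : ℝ) =
      (∑ k ∈ Finset.Icc 1 n, ArithmeticFunction.vonMangoldt k) -
        ∑ k ∈ Finset.Icc 1 n,
          ArithmeticFunction.vonMangoldt k * (if Dnk σ k = 0 then 1 else 0) := by
  have hS : ∀ d, d ∣ (fullCycleType σ).lcm → IsPrimePow d → d ∈ Icc 1 n := fun d hd hp =>
    mem_Icc.mpr ⟨hp.one_lt.le, le_of_dvd_lcm_fullCycleType hp hd⟩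
  rw [← sum_filter_dvd_vonMangoldt lcm_fullCycleType_ne_zero hS, sum_filter, ← sum_sub_distrib]
  refine sum_congr rfl fun k _ => ?_
  by_cases hk : IsPrimePow k
  · by_cases hD : Dnk σ k = 0 <;> simp [hD, ← Dnk_ne_zero_iff_dvd_lcm hk]
  · simp [vonMangoldt_eq_zero_iff.mpr hk]
end
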